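/- The four joint probabilities of a bivariate Bernoulli constructed via the correlated AND sum to one: for a, b ∈ (0,1) and ρ ∈ [−1,1], C_ρ(a,b) + C_{−ρ}(a,1−b) + C_{−ρ}(1−a,b) + C_ρ(1−a,1−b) = 1. -/
import Mathlib


noncomputable def rhoLower (a b : ℝ) : ℝ :=
  (max (a + b - 1) 0 - a * b) / Real.sqrt (a * (1 - a) * b * (1 - b))

noncomputable def rhoUpper (a b : ℝ) : ℝ :=
  (min a b - a * b) / Real.sqrt (a * (1 - a) * b * (1 - b))

noncomputable def lucas (ρ u v : ℝ) : ℝ :=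
  u * v + ρ * Real.sqrt (u * (1 - u) * v * (1 - v))

/-- Piecewise correlated AND operator. -/
noncomputable def Cand (ρ u v : ℝ) : ℝ :=
  if ρ ≤ rhoLower u v then max (u + v - 1) 0
  else if rhoUpper u v ≤ ρ then min u v
  else lucas ρ u v

/-- Clipped form of the correlated AND operator. -/
noncomputable def CandClip (ρ u v : ℝ) : ℝ :=
  min (min u v) (max (max (u + v - 1) 0) (lucas ρ u v))

lemma candClip_symm (ρ u v : ℝ) : CandClip ρ u v = CandClip ρ v u := by
  unfold CandClip lucas
  have h1 : min u v = min v u := min_comm _ _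
  have h2 : u + v - 1 = v + u - 1 := by ring
  have h3 : u * v + ρ * Real.sqrt (u * (1 - u) * v * (1 - v))
      = v * u + ρ * Real.sqrt (v * (1 - v) * u * (1 - u)) := by
    rw [show u * (1 - u) * v * (1 - v) = v * (1 - v) * u * (1 - u) from by ring]; ring
  rw [h1, h2, h3]

lemma candClip_compl (ρ u v : ℝ) (hu0 : 0 ≤ u) (hu1 : u ≤ 1) (hv0 : 0 ≤ v) (hv1 : v ≤ 1) :
    CandClip (-ρ) u (1 - v) = u - CandClip ρ u v := by
  unfold CandClip lucas
  have hs : u * (1 - u) * (1 - v) * (1 - (1 - v)) = u * (1 - u) * v * (1 - v) := by ring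
  rw [hs]
  set s := Real.sqrt (u * (1 - u) * v * (1 - v)) with hsdef
  set M := max (u + v - 1) 0 with hM
  set m := min u v with hm
  set L := u * v + ρ * s with hL
  have hMm : M ≤ m := by
    rw [hM, hm]
    simp only [max_le_iff, le_min_iff]
    constructor <;> constructor <;> linarith
  have e1 : min u (1 - v) = u - M := by
    rw [hM, ← min_sub_sub_left, show u - (u + v - 1) = 1 - v from by ring, sub_zero, min_comm]
  have e2 : max (u + (1 - v) - 1) 0 = u - m := by
    rw [hm, ← max_sub_sub_left, show u - v = u + (1 - v) - 1 from by ring, sub_self, max_comm]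
  have e3 : u * (1 - v) + -ρ * s = u - L := by rw [hL]; ring
  rw [e1, e2, e3, max_sub_sub_left, min_sub_sub_left, max_min_distrib_left, max_eq_right hMm]

theorem stmt_16 (a b ρ : ℝ) (ha : a ∈ Set.Ioo (0:ℝ) 1) (hb : b ∈ Set.Ioo (0:ℝ) 1)
    (hρ : ρ ∈ Set.Icc (-1:ℝ) 1) :
    CandClip ρ a b + CandClip (-ρ) a (1 - b) + CandClip (-ρ) (1 - a) b +
      CandClip ρ (1 - a) (1 - b) = 1 := by
  obtain ⟨ha0, ha1⟩ := ha
  obtain ⟨hb0, hb1⟩ := hb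
  have k1 : CandClip (-ρ) a (1 - b) = a - CandClip ρ a b :=
    candClip_compl ρ a b ha0.le ha1.le hb0.le hb1.le
  have k2 : CandClip (-ρ) (1 - a) b = b - CandClip ρ a b := by
    rw [candClip_symm, candClip_compl ρ b a hb0.le hb1.le ha0.le ha1.le, candClip_symm]
  have k3 : CandClip ρ (1 - a) (1 - b) = (1 - a) - CandClip (-ρ) (1 - a) b := by
    have := candClip_compl (-ρ) (1 - a) b (by linarith) (by linarith) hb0.le hb1.le
    rwa [neg_neg] at this
  rw [k1, k3, k2]; ring
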